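/- The slot-sequential choice rule C̄ is substitutable: for all Y ⊆ X and contracts x ∈ Y and z ∉ Y, if x ∉ C̄(Y) then x ∉ C̄(Y ∪ {z}). -/

import Mathlib

/-!
Since priorities are strict, adding a contract `z` to the offer set changes the first slot's
selection only if that slot now takes `z`. If its selection is unchanged, the later slots face
their old offer set plus `z`, and induction on the number of slots applies. If it takes `z`, the
later slots face exactly `Y`; they rejected `x` from `Y` minus the first slot's old selection `a`,
so by induction (adding `a` back) they reject `x` from `Y` as well.
-/

open Finset
variable {X : Type*} [DecidableEq X] [Fintype X]

/-- From an offer set `Y`, select the `π`-maximal element of `Y ∪ {∅}`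
(`none` plays the role of the null contract; higher `π`-value = higher priority). -/
noncomputable def pick (π : Option X → ℕ) (Y : Finset X) : Option X :=
  (((insert (none : Option X) (Y.image some)).toList).argmax π).join

/-- Slot-sequential choice: each slot selects the priority-maximal remaining contract. -/
noncomputable def chosen : List (Option X → ℕ) → Finset X → Finset X
  | [], _ => ∅
  | π :: L, Y =>
    match pick π Y with
    | none => chosen L Y
    | some x => insert x (chosen L (Y.erase x))

/-- Remaining contracts after all slots in the list have selected. -/
noncomputable def remain : List (Option X → ℕ) → Finset X → Finset X
  | [], Y => Y
  | π :: L, Y =>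
    match pick π Y with
    | none => remain L Y
    | some x => remain L (Y.erase x)

section Substitutable

variable {α : Type*} [DecidableEq α]

def Substitutable (C : Finset α → Finset α) : Prop :=
  ∀ ⦃Y : Finset α⦄ ⦃x z : α⦄, x ∈ Y → z ∉ Y → x ∉ C Y → x ∉ C (insert z Y)

theorem Substitutable.notMem_of_notMem_erase {C : Finset α → Finset α} (hC : Substitutable C)
    {Y : Finset α} {x a : α} (hx : x ∈ Y) (ha : a ∈ Y) (hxa : x ≠ a) (h : x ∉ C (Y.erase a)) :
    x ∉ C Y :=
  insert_erase ha ▸ hC (mem_erase.2 ⟨hxa, hx⟩) (notMem_erase a Y) h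

end Substitutable

section SlotChoice

variable {α : Type*} [DecidableEq α] {π : Option α → ℕ} {L : List (Option α → ℕ)}
  {Y : Finset α} {a x : α}

theorem insert_none_image_some_eq_insertNone (Y : Finset α) :
    insert none (Y.image some) = insertNone Y := by
  ext (_ | _) <;> simp

variable (π Y) in
theorem pick_spec :
    pick π Y ∈ insertNone Y ∧ ∀ b ∈ insertNone Y, π b ≤ π (pick π Y) := by
  rw [← insert_none_image_some_eq_insertNone]
  set S := insert (none : Option α) (Y.image some)
  obtain ⟨m, hm⟩ : ∃ m, S.toList.argmax π = some m :=
    Option.ne_none_iff_exists'.1 fun h ↦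
      insert_ne_empty _ _ (toList_eq_nil.1 (List.argmax_eq_none.1 h))
  have hpick : pick π Y = m := by simp only [pick, S, hm, Option.join_some]
  rw [hpick]
  exact ⟨mem_toList.1 (List.argmax_mem hm), fun b hb ↦ List.le_of_mem_argmax (mem_toList.2 hb) hm⟩

theorem mem_of_pick_eq_some (h : pick π Y = some a) : a ∈ Y :=
  some_mem_insertNone.1 (h ▸ (pick_spec π Y).1)

theorem pick_eq_of_forall_le (hπ : Function.Injective π) {m : Option α} (hm : m ∈ insertNone Y)
    (hmax : ∀ b ∈ insertNone Y, π b ≤ π m) : pick π Y = m :=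
  hπ <| le_antisymm (hmax _ (pick_spec π Y).1) ((pick_spec π Y).2 _ hm)

theorem insertNone_insert (Y : Finset α) (z : α) :
    insertNone (insert z Y) = insert (some z) (insertNone Y) := by
  ext (_ | _) <;> simp

theorem pick_insert (hπ : Function.Injective π) (Y : Finset α) (z : α) :
    pick π (insert z Y) = pick π Y ∨ pick π (insert z Y) = some z := by
  obtain ⟨hmem, hmax⟩ := pick_spec π Y
  rcases le_or_gt (π (some z)) (π (pick π Y)) with hle | hlt
  · refine .inl (pick_eq_of_forall_le hπ ?_ ?_) <;> rw [insertNone_insert]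
    · exact mem_insert_of_mem hmem
    · exact forall_mem_insert _ _ _ |>.2 ⟨hle, hmax⟩
  · refine .inr (pick_eq_of_forall_le hπ ?_ ?_) <;> rw [insertNone_insert]
    · exact mem_insert_self _ _
    · exact forall_mem_insert _ _ _ |>.2 ⟨le_rfl, fun b hb ↦ (hmax b hb).trans hlt.le⟩

theorem chosen_cons_of_pick_eq_none (h : pick π Y = none) : chosen (π :: L) Y = chosen L Y := by
  rw [chosen, h]

theorem chosen_cons_of_pick_eq_some (h : pick π Y = some a) :
    chosen (π :: L) Y = insert a (chosen L (Y.erase a)) := by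
  rw [chosen, h]

theorem notMem_chosen_of_notMem_chosen_cons (hL : Substitutable (chosen L)) (hx : x ∈ Y)
    (h : x ∉ chosen (π :: L) Y) : x ∉ chosen L Y := by
  cases hp : pick π Y with
  | none => rwa [chosen_cons_of_pick_eq_none hp] at h
  | some a =>
    rw [chosen_cons_of_pick_eq_some hp, mem_insert, not_or] at h
    exact hL.notMem_of_notMem_erase hx (mem_of_pick_eq_some hp) h.1 h.2

theorem substitutable_chosen_cons (hπ : Function.Injective π) (hL : Substitutable (chosen L)) :
    Substitutable (chosen (π :: L)) := by
  intro Y x z hx hz h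
  rcases pick_insert hπ Y z with hpick | hpick
  · cases hp : pick π Y with
    | none =>
      rw [chosen_cons_of_pick_eq_none hp] at h
      rw [chosen_cons_of_pick_eq_none (hpick.trans hp)]
      exact hL hx hz h
    | some a =>
      rw [chosen_cons_of_pick_eq_some hp, mem_insert, not_or] at h
      have hza : z ≠ a := ne_of_mem_of_not_mem (mem_of_pick_eq_some hp) hz |>.symm
      rw [chosen_cons_of_pick_eq_some (hpick.trans hp), erase_insert_of_ne hza, mem_insert,
        not_or]
      exact ⟨h.1, hL (mem_erase.2 ⟨h.1, hx⟩) (mt mem_of_mem_erase hz) h.2⟩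
  · rw [chosen_cons_of_pick_eq_some hpick, erase_insert hz, mem_insert, not_or]
    exact ⟨ne_of_mem_of_not_mem hx hz, notMem_chosen_of_notMem_chosen_cons hL hx h⟩

theorem substitutable_chosen (hinj : ∀ π ∈ L, Function.Injective π) :
    Substitutable (chosen L) := by
  induction L with
  | nil => exact fun _ _ _ _ _ _ ↦ by simp [chosen]
  | cons π L ih =>
    exact substitutable_chosen_cons (hinj π List.mem_cons_self)
      (ih fun p hp ↦ hinj p (List.mem_cons_of_mem π hp))

end SlotChoice

/-- The slot-sequential choice rule is substitutable. -/
theorem chosen_substitutable (L : List (Option X → ℕ)) (hinj : ∀ π ∈ L, Function.Injective π)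
    (Y : Finset X) (x z : X) (hx : x ∈ Y) (hz : z ∉ Y) (h : x ∉ chosen L Y) :
    x ∉ chosen L (insert z Y) :=
  substitutable_chosen hinj hx hz h
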